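/- (Alignment of the first zero with Ẑ.) Assume Ŷ and Ẑ are linearly independent and ⟨Ŷ, Ẑ⟩ = ⟨y, z⟩. Then s₁ < 0 < s₂ and the vector ω̂₁ = α q₁ + β q₂ equals Ẑ/‖Ẑ‖ exactly. -/

import Mathlib

open Matrix

/-- The Euclidean norm of a vector in `Fin n → ℝ`. -/
noncomputable def euclNorm {n : ℕ} (v : Fin n → ℝ) : ℝ := Real.sqrt (v ⬝ᵥ v)

lemma dot_self_nonneg {n : ℕ} (v : Fin n → ℝ) : 0 ≤ v ⬝ᵥ v :=
  Finset.sum_nonneg fun i _ => mul_self_nonneg _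

lemma euclNorm_sq {n : ℕ} (v : Fin n → ℝ) : euclNorm v * euclNorm v = v ⬝ᵥ v :=
  Real.mul_self_sqrt (dot_self_nonneg v)

lemma euclNorm_pos {n : ℕ} {v : Fin n → ℝ} (hv : v ≠ 0) : 0 < euclNorm v :=
  Real.sqrt_pos.2 (lt_of_le_of_ne (dot_self_nonneg v) fun h => hv (dotProduct_self_eq_zero.1 h.symm))

/-- Strict Cauchy–Schwarz. -/
lemma strict_cs {n : ℕ} {v w : Fin n → ℝ} (h : LinearIndependent ℝ ![v, w]) :
    (v ⬝ᵥ w) * (v ⬝ᵥ w) < (v ⬝ᵥ v) * (w ⬝ᵥ w) := by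
  have hw : w ≠ 0 := h.ne_zero 1
  have hww : 0 < w ⬝ᵥ w :=
    lt_of_le_of_ne (dot_self_nonneg w) fun h' => hw (dotProduct_self_eq_zero.1 h'.symm)
  set u : Fin n → ℝ := (w ⬝ᵥ w) • v - (v ⬝ᵥ w) • w with hu
  have hune : u ≠ 0 := by
    intro h0
    have := (LinearIndependent.pair_iff.1 h) (w ⬝ᵥ w) (-(v ⬝ᵥ w)) (by
      rw [neg_smul, ← sub_eq_add_neg]; exact h0)
    exact hww.ne' this.1
  have huu : 0 < u ⬝ᵥ u :=
    lt_of_le_of_ne (dot_self_nonneg u) fun h' => hune (dotProduct_self_eq_zero.1 h'.symm)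
  have hexp : u ⬝ᵥ u = (w ⬝ᵥ w) * ((v ⬝ᵥ v) * (w ⬝ᵥ w) - (v ⬝ᵥ w) * (v ⬝ᵥ w)) := by
    simp only [hu, sub_dotProduct, dotProduct_sub, smul_dotProduct,
      dotProduct_smul, smul_eq_mul]
    have hc : w ⬝ᵥ v = v ⬝ᵥ w := dotProduct_comm w v
    rw [hc]; ring
  rw [hexp] at huu
  nlinarith [hww]

/-- Alignment of the first zero with `Ẑ`: if `Ŷ = Xᵀy` and `Ẑ = Xᵀz` are linearly
independent and `⟨Ŷ,Ẑ⟩ = ⟨y,z⟩`, then `s₁ < 0 < s₂` and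
`ω̂₁ = α q₁ + β q₂ = Ẑ/‖Ẑ‖`. -/
theorem first_zero_aligns_with_Zhat
    (N K : ℕ) (hN : 0 < N) (hK : 0 < K)
    (y z : Fin N → ℝ) (X : Matrix (Fin N) (Fin K) ℝ)
    (hX : Xᵀ * X = 1)
    (Yh Zh : Fin K → ℝ) (hYh : Yh = Xᵀ.mulVec y) (hZh : Zh = Xᵀ.mulVec z)
    (hli : LinearIndependent ℝ ![Yh, Zh])
    (heq : Yh ⬝ᵥ Zh = y ⬝ᵥ z)
    (q1 q2 : Fin K → ℝ)
    (hq1 : q1 = (euclNorm (euclNorm Yh • Zh + euclNorm Zh • Yh))⁻¹ •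
        (euclNorm Yh • Zh + euclNorm Zh • Yh))
    (hq2 : q2 = (euclNorm (euclNorm Yh • Zh - euclNorm Zh • Yh))⁻¹ •
        (euclNorm Yh • Zh - euclNorm Zh • Yh))
    (s1 s2 α β : ℝ)
    (hs1 : s1 = y ⬝ᵥ z - (euclNorm Yh * euclNorm Zh + Yh ⬝ᵥ Zh) / 2)
    (hs2 : s2 = y ⬝ᵥ z + (euclNorm Yh * euclNorm Zh - Yh ⬝ᵥ Zh) / 2)
    (hα : α = Real.sqrt (s2 / (s2 - s1)))
    (hβ : β = Real.sqrt (-s1 / (s2 - s1))) :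
    s1 < 0 ∧ 0 < s2 ∧ α • q1 + β • q2 = (euclNorm Zh)⁻¹ • Zh := by
  set a := euclNorm Yh with ha
  set b := euclNorm Zh with hb
  set c := Yh ⬝ᵥ Zh with hc
  have hYne : Yh ≠ 0 := hli.ne_zero 0
  have hZne : Zh ≠ 0 := hli.ne_zero 1
  have hapos : 0 < a := euclNorm_pos hYne
  have hbpos : 0 < b := euclNorm_pos hZne
  have ha2 : a * a = Yh ⬝ᵥ Yh := euclNorm_sq Yh
  have hb2 : b * b = Zh ⬝ᵥ Zh := euclNorm_sq Zh
  have hcs : c * c < (a * a) * (b * b) := by rw [ha2, hb2]; exact strict_cs hli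
  have habs : |c| < a * b := by
    have : |c| * |c| < (a*b) * (a*b) := by rw [abs_mul_abs_self]; nlinarith
    nlinarith [abs_nonneg c, mul_pos hapos hbpos]
  have hclt : c < a * b := lt_of_abs_lt habs
  have hcgt : -(a*b) < c := neg_lt_of_abs_lt habs
  have hs1' : s1 = (c - a * b) / 2 := by rw [hs1, ← heq]; ring
  have hs2' : s2 = (c + a * b) / 2 := by rw [hs2, ← heq]; ring
  have hs1neg : s1 < 0 := by rw [hs1']; linarith
  have hs2pos : 0 < s2 := by rw [hs2']; linarith
  refine ⟨hs1neg, hs2pos, ?_⟩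
  -- norms of the combined vectors
  have hdot1 : (a • Zh + b • Yh) ⬝ᵥ (a • Zh + b • Yh) = 2 * (a*b) * (a*b + c) := by
    simp only [add_dotProduct, dotProduct_add, smul_dotProduct,
      dotProduct_smul, smul_eq_mul]
    have h1 : Zh ⬝ᵥ Yh = c := (dotProduct_comm Zh Yh).trans hc.symm
    rw [h1, ← hb2, ← ha2, ← hc]; ring
  have hdot2 : (a • Zh - b • Yh) ⬝ᵥ (a • Zh - b • Yh) = 2 * (a*b) * (a*b - c) := by
    simp only [sub_dotProduct, dotProduct_sub, smul_dotProduct,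
      dotProduct_smul, smul_eq_mul]
    have h1 : Zh ⬝ᵥ Yh = c := (dotProduct_comm Zh Yh).trans hc.symm
    rw [h1, ← hb2, ← ha2, ← hc]; ring
  have habpos : 0 < a * b := mul_pos hapos hbpos
  have hP : 0 < a * b + c := by linarith
  have hM : 0 < a * b - c := by linarith
  have hn1 : euclNorm (a • Zh + b • Yh) = Real.sqrt (2 * (a*b) * (a*b + c)) := by
    rw [euclNorm, hdot1]
  have hn2 : euclNorm (a • Zh - b • Yh) = Real.sqrt (2 * (a*b) * (a*b - c)) := by
    rw [euclNorm, hdot2]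
  have hss : s2 - s1 = a * b := by rw [hs1', hs2']; ring
  -- coefficient computations
  have key : ∀ d : ℝ, 0 < d → d ≤ 2 * (a*b) →
      Real.sqrt (d / (2 * (a*b))) * (Real.sqrt (2 * (a*b) * d))⁻¹ = (2 * (a*b))⁻¹ := by
    intro d hd _
    have h2ab : (0:ℝ) < 2 * (a*b) := by linarith
    have hB : 2 * (a*b) * d = (d / (2 * (a*b))) * (2 * (a*b))^2 := by
      field_simp
    rw [hB, Real.sqrt_mul (by positivity), Real.sqrt_sq h2ab.le]
    have hAne : Real.sqrt (d / (2 * (a*b))) ≠ 0 := by positivity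
    rw [mul_inv, ← mul_assoc, mul_inv_cancel₀ hAne, one_mul]
  have hαval : α * (euclNorm (a • Zh + b • Yh))⁻¹ = (2 * (a*b))⁻¹ := by
    rw [hα, hn1, hss, hs2']
    have : (c + a * b) / 2 / (a * b) = (a*b + c) / (2 * (a*b)) := by ring
    rw [this]
    exact key (a*b + c) hP (by linarith)
  have hβval : β * (euclNorm (a • Zh - b • Yh))⁻¹ = (2 * (a*b))⁻¹ := by
    rw [hβ, hn2, hss, hs1']
    have : -((c - a * b) / 2) / (a * b) = (a*b - c) / (2 * (a*b)) := by ring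
    rw [this]
    exact key (a*b - c) hM (by linarith)
  rw [hq1, hq2, smul_smul, smul_smul, hαval, hβval]
  funext i
  simp only [Pi.add_apply, Pi.smul_apply, Pi.sub_apply, smul_eq_mul]
  have hane := hapos.ne'
  have hbne := hbpos.ne'
  field_simp
  ring
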